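/- Design-independent Fixed-X optimism equals Same-X optimism (Proposition 2(ii)). Suppose Assumption 6 holds. If, under the Fixed-X setting, the optimism OptF does not depend on the design points x_1,…,x_n, then OptF is equal to the optimism OptS under the Same-X setting. -/

import Mathlib

/-!
Proposition 2(ii) of "Fixed and Random Covariance Regression Analyses":
if the Fixed-X optimism does not depend on the design points, then it equals the
Same-X optimism.
-/

open MeasureTheory Matrix ProbabilityTheory
open scoped BigOperators

noncomputable section

/-- `vec(y yᵀ)`, the vectorized outer product of a vector with itself. -/
def vecOuter {p : ℕ} (y : Fin p → ℝ) : Fin p × Fin p → ℝ := fun ab => y ab.1 * y ab.2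

/-- The weighted squared-error loss `L(y, c) = (y - c)ᵀ W (y - c)`. -/
def wLoss {p : ℕ} (Wm : Matrix (Fin p × Fin p) (Fin p × Fin p) ℝ)
    (y c : Fin p × Fin p → ℝ) : ℝ := (y - c) ⬝ᵥ Wm.mulVec (y - c)

/-- The average loss `(1/n) Σᵢ L(vec(yᵢyᵢᵀ), ĉ(xᵢ))` of a fitted covariance function `ĉ`
over data `(xᵢ, yᵢ), i = 1, …, n`; both the training error and the test error have
this form. -/
def avgLoss {𝒳 : Type*} {p n : ℕ} (W : 𝒳 → Matrix (Fin p × Fin p) (Fin p × Fin p) ℝ)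
    (xs : Fin n → 𝒳) (ys : Fin n → Fin p → ℝ) (chat : 𝒳 → Fin p × Fin p → ℝ) : ℝ :=
  (1 / (n:ℝ)) * ∑ i, wLoss (W (xs i)) (vecOuter (ys i)) (chat (xs i))

/-!
In both settings the loss is one measurable function of the design and of the error array,
and the errors are independent of the design. By Fubini on the product of the two laws, each
Same-X expectation is the corresponding Fixed-X expectation averaged over the law of the
design; when the Fixed-X optimism is the same for every design, that average is the constant.
-/

section IndepFubini

variable {Ω A B E : Type*} [MeasurableSpace Ω] [MeasurableSpace A] [MeasurableSpace B]
  [NormedAddCommGroup E] {μ : Measure Ω} {U : Ω → A} {V : Ω → B} {F : A × B → E}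

lemma integrable_prod_map_of_indepFun [IsFiniteMeasure μ] (hU : Measurable U)
    (hV : Measurable V) (hUV : IndepFun U V μ) (hF : StronglyMeasurable F)
    (hFi : Integrable (fun ω => F (U ω, V ω)) μ) :
    Integrable F ((μ.map U).prod (μ.map V)) := by
  rw [← (indepFun_iff_map_prod_eq_prod_map_map hU.aemeasurable hV.aemeasurable).mp hUV]
  exact (integrable_map_measure hF.aestronglyMeasurable (hU.prodMk hV).aemeasurable).mpr hFi

variable [NormedSpace ℝ E]

lemma integral_map_comp_prodMk_left (hV : Measurable V) (hF : StronglyMeasurable F) (a : A) :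
    ∫ b, F (a, b) ∂(μ.map V) = ∫ ω, F (a, V ω) ∂μ :=
  integral_map hV.aemeasurable (hF.comp_measurable measurable_prodMk_left).aestronglyMeasurable

lemma integrable_integral_comp_of_indepFun [IsFiniteMeasure μ] (hU : Measurable U)
    (hV : Measurable V) (hUV : IndepFun U V μ) (hF : StronglyMeasurable F)
    (hFi : Integrable (fun ω => F (U ω, V ω)) μ) :
    Integrable (fun a => ∫ ω, F (a, V ω) ∂μ) (μ.map U) :=
  (integrable_prod_map_of_indepFun hU hV hUV hF hFi).integral_prod_left.congr
    (.of_forall (integral_map_comp_prodMk_left hV hF))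

lemma integral_comp_eq_integral_integral_of_indepFun [IsFiniteMeasure μ] (hU : Measurable U)
    (hV : Measurable V) (hUV : IndepFun U V μ) (hF : StronglyMeasurable F)
    (hFi : Integrable (fun ω => F (U ω, V ω)) μ) :
    ∫ ω, F (U ω, V ω) ∂μ = ∫ a, ∫ ω, F (a, V ω) ∂μ ∂(μ.map U) := calc
  ∫ ω, F (U ω, V ω) ∂μ = ∫ z, F z ∂(μ.map fun ω => (U ω, V ω)) :=
    (integral_map (hU.prodMk hV).aemeasurable hF.aestronglyMeasurable).symm
  _ = ∫ z, F z ∂((μ.map U).prod (μ.map V)) := by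
    rw [(indepFun_iff_map_prod_eq_prod_map_map hU.aemeasurable hV.aemeasurable).mp hUV]
  _ = ∫ a, ∫ b, F (a, b) ∂(μ.map V) ∂(μ.map U) :=
    integral_prod F (integrable_prod_map_of_indepFun hU hV hUV hF hFi)
  _ = ∫ a, ∫ ω, F (a, V ω) ∂μ ∂(μ.map U) := by
    simp only [integral_map_comp_prodMk_left hV hF]

lemma integral_sub_integral_of_indepFun_of_forall_eq [CompleteSpace E] [IsProbabilityMeasure μ]
    (hU : Measurable U) (hV : Measurable V) (hUV : IndepFun U V μ) {G : A × B → E}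
    (hF : StronglyMeasurable F) (hG : StronglyMeasurable G)
    (hFi : Integrable (fun ω => F (U ω, V ω)) μ)
    (hGi : Integrable (fun ω => G (U ω, V ω)) μ) {c : E}
    (hc : ∀ a, ∫ ω, F (a, V ω) ∂μ - ∫ ω, G (a, V ω) ∂μ = c) :
    ∫ ω, F (U ω, V ω) ∂μ - ∫ ω, G (U ω, V ω) ∂μ = c := by
  have : IsProbabilityMeasure (μ.map U) := Measure.isProbabilityMeasure_map hU.aemeasurable
  rw [integral_comp_eq_integral_integral_of_indepFun hU hV hUV hF hFi,
    integral_comp_eq_integral_integral_of_indepFun hU hV hUV hG hGi,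
    ← integral_sub (integrable_integral_comp_of_indepFun hU hV hUV hF hFi)
      (integrable_integral_comp_of_indepFun hU hV hUV hG hGi)]
  simp only [hc, integral_const, probReal_univ, one_smul]

end IndepFubini

section Measurability

variable {𝒳 : Type*} [MeasurableSpace 𝒳] {n p : ℕ}

lemma measurable_avgLoss {α : Type*} [MeasurableSpace α]
    {W : 𝒳 → Matrix (Fin p × Fin p) (Fin p × Fin p) ℝ}
    (hW : ∀ ab cd, Measurable fun t => W t ab cd) {xs : α → Fin n → 𝒳}
    {ys : α → Fin n → Fin p → ℝ} {chat : α → 𝒳 → Fin p × Fin p → ℝ}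
    (hxs : Measurable xs) (hys : Measurable ys)
    (hchat : ∀ i ab, Measurable fun a => chat a (xs a i) ab) :
    Measurable fun a => avgLoss W (xs a) (ys a) (chat a) := by
  have hWx : ∀ i ab cd, Measurable fun a => W (xs a i) ab cd := fun i ab cd => by fun_prop
  have hres : ∀ i ab, Measurable fun a => vecOuter (ys a i) ab - chat a (xs a i) ab :=
    fun i ab => ((measurable_pi_apply _).comp ((measurable_pi_apply i).comp hys)).mul
      ((measurable_pi_apply _).comp ((measurable_pi_apply i).comp hys)) |>.sub (hchat i ab)
  unfold avgLoss wLoss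
  simp only [dotProduct, mulVec, Pi.sub_apply]
  exact (Finset.measurable_sum _ fun i _ => Finset.measurable_sum _ fun ab _ => (hres i ab).mul
    (Finset.measurable_sum _ fun cd _ => (hWx i ab cd).mul (hres i cd))).const_mul _

lemma measurable_mulVec_comp {M : 𝒳 → Matrix (Fin p) (Fin p) ℝ}
    (hM : ∀ a b, Measurable fun t => M t a b) {α : Type*} [MeasurableSpace α]
    {x : α → 𝒳} {v : α → Fin p → ℝ} (hx : Measurable x) (hv : Measurable v) :
    Measurable fun a => (M (x a)).mulVec (v a) := by
  refine measurable_pi_lambda _ fun i => ?_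
  have hMx : ∀ j, Measurable fun a => M (x a) i j := fun j => by fun_prop
  have hvj : ∀ j, Measurable fun a => v a j := fun j => by fun_prop
  simp only [mulVec, dotProduct]
  fun_prop

variable (Csqrt : 𝒳 → Matrix (Fin p) (Fin p) ℝ)

def responsesOfErrors (s : Fin n → Fin n ⊕ Fin n)
    (z : (Fin n → 𝒳) × ((Fin n ⊕ Fin n) × Fin p → ℝ)) : Fin n → Fin p → ℝ :=
  fun i => (Csqrt (z.1 i)).mulVec fun j => z.2 (s i, j)

/-- At `z = (x, e)` with `e q = ε q.1 · q.2`, this is the training error for `s = Sum.inl`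
and the test error for `s = Sum.inr`, at design `x`. -/
def avgLossOfErrors (W : 𝒳 → Matrix (Fin p × Fin p) (Fin p × Fin p) ℝ)
    (Chat : (Fin n → 𝒳) → (Fin n → Fin p → ℝ) → 𝒳 → (Fin p × Fin p → ℝ))
    (s : Fin n → Fin n ⊕ Fin n) (z : (Fin n → 𝒳) × ((Fin n ⊕ Fin n) × Fin p → ℝ)) :
    ℝ :=
  avgLoss W z.1 (responsesOfErrors Csqrt s z) (Chat z.1 (responsesOfErrors Csqrt Sum.inl z))

variable {Csqrt}

lemma measurable_responsesOfErrors (hC : ∀ a b, Measurable fun t => Csqrt t a b)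
    (s : Fin n → Fin n ⊕ Fin n) : Measurable (responsesOfErrors Csqrt s) :=
  measurable_pi_lambda _ fun i => measurable_mulVec_comp hC (by fun_prop) (by fun_prop)

lemma measurable_avgLossOfErrors (hC : ∀ a b, Measurable fun t => Csqrt t a b)
    {W : 𝒳 → Matrix (Fin p × Fin p) (Fin p × Fin p) ℝ}
    (hW : ∀ ab cd, Measurable fun t => W t ab cd)
    {Chat : (Fin n → 𝒳) → (Fin n → Fin p → ℝ) → 𝒳 → (Fin p × Fin p → ℝ)}
    (hChat : ∀ ab, Measurable fun q : (Fin n → 𝒳) × (Fin n → Fin p → ℝ) × 𝒳 =>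
      Chat q.1 q.2.1 q.2.2 ab)
    (s : Fin n → Fin n ⊕ Fin n) : Measurable (avgLossOfErrors Csqrt W Chat s) :=
  measurable_avgLoss hW measurable_fst (measurable_responsesOfErrors hC s) fun i ab =>
    (hChat ab).comp <| measurable_fst.prodMk <|
      (measurable_responsesOfErrors hC Sum.inl).prodMk (by fun_prop)

end Measurability

theorem design_independent_fixedX_optimism_eq_sameX_optimism_general
    -- probability space
    {Ω : Type*} [MeasurableSpace Ω] (μ : Measure Ω) [IsProbabilityMeasure μ]
    -- dimensions
    (n p : ℕ)
    -- space of explanatory variables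
    {𝒳 : Type*} [MeasurableSpace 𝒳]
    -- the true covariance function `C(·)` and its symmetric square root `C^{1/2}(·)`
    (Csqrt : 𝒳 → Matrix (Fin p) (Fin p) ℝ)
    (hCmeas : ∀ a b, Measurable fun t => Csqrt t a b)
    -- the weight matrices `W(·)` (positive semidefinite)
    (W : 𝒳 → Matrix (Fin p × Fin p) (Fin p × Fin p) ℝ)
    (hWmeas : ∀ ab cd, Measurable fun t => W t ab cd)
    -- Assumption 6: the errors for the training (`inl`) and test (`inr`) responses;
    -- entries i.i.d. in both indices, independent of the X's, mean 0, variance 1,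
    -- fourth moment μ⁴ and finite (4+η₁)-th absolute moment
    (ε : (Fin n ⊕ Fin n) → Ω → Fin p → ℝ)
    (hεmeas : ∀ α j, Measurable fun ω => ε α ω j)
    -- Same-X setting: i.i.d. training explanatory variables, independent of the errors;
    -- the test explanatory variables are the same
    (X : Fin n → Ω → 𝒳)
    (hXmeas : ∀ i, Measurable (X i))
    (hεXindep : IndepFun (fun ω (q : (Fin n ⊕ Fin n) × Fin p) => ε q.1 ω q.2)
      (fun ω (i : Fin n) => X i ω) μ)
    -- the fitted (vectorized) covariance function `Ĉ(·)`, estimated from the training data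
    (Chat : (Fin n → 𝒳) → (Fin n → Fin p → ℝ) → 𝒳 → (Fin p × Fin p → ℝ))
    (hChatMeas : ∀ ab, Measurable fun q : (Fin n → 𝒳) × (Fin n → Fin p → ℝ) × 𝒳 =>
      Chat q.1 q.2.1 q.2.2 ab)
    -- integrability, under the Fixed-X setting for every design and under the Same-X setting
    (hIntS :
      Integrable (fun ω => avgLoss W (fun i => X i ω)
          (fun i => (Csqrt (X i ω)).mulVec (ε (Sum.inl i) ω))
          (Chat (fun j => X j ω) (fun j => (Csqrt (X j ω)).mulVec (ε (Sum.inl j) ω)))) μ ∧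
      Integrable (fun ω => avgLoss W (fun i => X i ω)
          (fun i => (Csqrt (X i ω)).mulVec (ε (Sum.inr i) ω))
          (Chat (fun j => X j ω) (fun j => (Csqrt (X j ω)).mulVec (ε (Sum.inl j) ω)))) μ)
    -- hypothesis: the Fixed-X optimism `OptF = ErrF − E[Tr]` does not depend on the
    -- design points `x₁, …, xₙ`
    (hconst : ∀ x x' : Fin n → 𝒳,
      ((∫ ω, avgLoss W x (fun i => (Csqrt (x i)).mulVec (ε (Sum.inr i) ω))
            (Chat x (fun j => (Csqrt (x j)).mulVec (ε (Sum.inl j) ω))) ∂μ)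
        - (∫ ω, avgLoss W x (fun i => (Csqrt (x i)).mulVec (ε (Sum.inl i) ω))
            (Chat x (fun j => (Csqrt (x j)).mulVec (ε (Sum.inl j) ω))) ∂μ))
        =
      ((∫ ω, avgLoss W x' (fun i => (Csqrt (x' i)).mulVec (ε (Sum.inr i) ω))
            (Chat x' (fun j => (Csqrt (x' j)).mulVec (ε (Sum.inl j) ω))) ∂μ)
        - (∫ ω, avgLoss W x' (fun i => (Csqrt (x' i)).mulVec (ε (Sum.inl i) ω))
            (Chat x' (fun j => (Csqrt (x' j)).mulVec (ε (Sum.inl j) ω))) ∂μ))) :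
    -- conclusion: for every design, the Fixed-X optimism equals the Same-X optimism
    -- `OptS = ErrS − E[Tr]`
    ∀ x : Fin n → 𝒳,
      ((∫ ω, avgLoss W x (fun i => (Csqrt (x i)).mulVec (ε (Sum.inr i) ω))
            (Chat x (fun j => (Csqrt (x j)).mulVec (ε (Sum.inl j) ω))) ∂μ)
        - (∫ ω, avgLoss W x (fun i => (Csqrt (x i)).mulVec (ε (Sum.inl i) ω))
            (Chat x (fun j => (Csqrt (x j)).mulVec (ε (Sum.inl j) ω))) ∂μ))
        =
      ((∫ ω, avgLoss W (fun i => X i ω) (fun i => (Csqrt (X i ω)).mulVec (ε (Sum.inr i) ω))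
            (Chat (fun j => X j ω) (fun j => (Csqrt (X j ω)).mulVec (ε (Sum.inl j) ω))) ∂μ)
        - (∫ ω, avgLoss W (fun i => X i ω) (fun i => (Csqrt (X i ω)).mulVec (ε (Sum.inl i) ω))
            (Chat (fun j => X j ω) (fun j => (Csqrt (X j ω)).mulVec (ε (Sum.inl j) ω))) ∂μ)) := by
  intro x
  have hE : Measurable fun ω (q : (Fin n ⊕ Fin n) × Fin p) => ε q.1 ω q.2 :=
    measurable_pi_lambda _ fun q => hεmeas q.1 q.2
  have hLoss := measurable_avgLossOfErrors hCmeas hWmeas hChatMeas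
  exact (integral_sub_integral_of_indepFun_of_forall_eq (measurable_pi_lambda _ hXmeas) hE
    hεXindep.symm (hLoss Sum.inr).stronglyMeasurable (hLoss Sum.inl).stronglyMeasurable
    hIntS.2 hIntS.1 fun x' => hconst x' x).symm

theorem design_independent_fixedX_optimism_eq_sameX_optimism
    -- probability space
    {Ω : Type*} [MeasurableSpace Ω] (μ : Measure Ω) [IsProbabilityMeasure μ]
    -- dimensions
    (n p : ℕ) (hn : 0 < n)
    -- space of explanatory variables
    {𝒳 : Type*} [MeasurableSpace 𝒳]
    -- the true covariance function `C(·)` and its symmetric square root `C^{1/2}(·)`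
    (C Csqrt : 𝒳 → Matrix (Fin p) (Fin p) ℝ)
    (hCsqrt : ∀ t, (Csqrt t).IsSymm ∧ Csqrt t * Csqrt t = C t)
    (hCmeas : ∀ a b, Measurable fun t => Csqrt t a b)
    -- the weight matrices `W(·)` (positive semidefinite)
    (W : 𝒳 → Matrix (Fin p × Fin p) (Fin p × Fin p) ℝ)
    (hWpsd : ∀ t, (W t).PosSemidef)
    (hWmeas : ∀ ab cd, Measurable fun t => W t ab cd)
    -- Assumption 6: the errors for the training (`inl`) and test (`inr`) responses;
    -- entries i.i.d. in both indices, independent of the X's, mean 0, variance 1,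
    -- fourth moment μ⁴ and finite (4+η₁)-th absolute moment
    (ε : (Fin n ⊕ Fin n) → Ω → Fin p → ℝ)
    (hεmeas : ∀ α j, Measurable fun ω => ε α ω j)
    (hεindep : iIndepFun
      (fun (q : (Fin n ⊕ Fin n) × Fin p) ω => ε q.1 ω q.2) μ)
    (hεident : ∀ q q' : (Fin n ⊕ Fin n) × Fin p,
      IdentDistrib (fun ω => ε q.1 ω q.2) (fun ω => ε q'.1 ω q'.2) μ μ)
    (hεmean : ∀ α j, ∫ ω, ε α ω j ∂μ = 0)
    (hεvar : ∀ α j, ∫ ω, (ε α ω j) ^ 2 ∂μ = 1)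
    (μ4 : ℝ) (hεmom4 : ∀ α j, ∫ ω, (ε α ω j) ^ 4 ∂μ = μ4)
    (hεmom : ∃ η₁ > (0:ℝ), ∀ α j, Integrable (fun ω => |ε α ω j| ^ (4 + η₁)) μ)
    -- Same-X setting: i.i.d. training explanatory variables, independent of the errors;
    -- the test explanatory variables are the same
    (X : Fin n → Ω → 𝒳)
    (hXmeas : ∀ i, Measurable (X i))
    (hXindep : iIndepFun X μ)
    (hXident : ∀ i i', IdentDistrib (X i) (X i') μ μ)
    (hεXindep : IndepFun (fun ω (q : (Fin n ⊕ Fin n) × Fin p) => ε q.1 ω q.2)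
      (fun ω (i : Fin n) => X i ω) μ)
    -- the fitted (vectorized) covariance function `Ĉ(·)`, estimated from the training data
    (Chat : (Fin n → 𝒳) → (Fin n → Fin p → ℝ) → 𝒳 → (Fin p × Fin p → ℝ))
    (hChatMeas : ∀ ab, Measurable fun q : (Fin n → 𝒳) × (Fin n → Fin p → ℝ) × 𝒳 =>
      Chat q.1 q.2.1 q.2.2 ab)
    -- integrability, under the Fixed-X setting for every design and under the Same-X setting
    (hIntF : ∀ x : Fin n → 𝒳,
      Integrable (fun ω => avgLoss W x (fun i => (Csqrt (x i)).mulVec (ε (Sum.inl i) ω))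
          (Chat x (fun j => (Csqrt (x j)).mulVec (ε (Sum.inl j) ω)))) μ ∧
      Integrable (fun ω => avgLoss W x (fun i => (Csqrt (x i)).mulVec (ε (Sum.inr i) ω))
          (Chat x (fun j => (Csqrt (x j)).mulVec (ε (Sum.inl j) ω)))) μ)
    (hIntS :
      Integrable (fun ω => avgLoss W (fun i => X i ω)
          (fun i => (Csqrt (X i ω)).mulVec (ε (Sum.inl i) ω))
          (Chat (fun j => X j ω) (fun j => (Csqrt (X j ω)).mulVec (ε (Sum.inl j) ω)))) μ ∧
      Integrable (fun ω => avgLoss W (fun i => X i ω)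
          (fun i => (Csqrt (X i ω)).mulVec (ε (Sum.inr i) ω))
          (Chat (fun j => X j ω) (fun j => (Csqrt (X j ω)).mulVec (ε (Sum.inl j) ω)))) μ)
    -- hypothesis: the Fixed-X optimism `OptF = ErrF − E[Tr]` does not depend on the
    -- design points `x₁, …, xₙ`
    (hconst : ∀ x x' : Fin n → 𝒳,
      ((∫ ω, avgLoss W x (fun i => (Csqrt (x i)).mulVec (ε (Sum.inr i) ω))
            (Chat x (fun j => (Csqrt (x j)).mulVec (ε (Sum.inl j) ω))) ∂μ)
        - (∫ ω, avgLoss W x (fun i => (Csqrt (x i)).mulVec (ε (Sum.inl i) ω))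
            (Chat x (fun j => (Csqrt (x j)).mulVec (ε (Sum.inl j) ω))) ∂μ))
        =
      ((∫ ω, avgLoss W x' (fun i => (Csqrt (x' i)).mulVec (ε (Sum.inr i) ω))
            (Chat x' (fun j => (Csqrt (x' j)).mulVec (ε (Sum.inl j) ω))) ∂μ)
        - (∫ ω, avgLoss W x' (fun i => (Csqrt (x' i)).mulVec (ε (Sum.inl i) ω))
            (Chat x' (fun j => (Csqrt (x' j)).mulVec (ε (Sum.inl j) ω))) ∂μ))) :
    -- conclusion: for every design, the Fixed-X optimism equals the Same-X optimism
    -- `OptS = ErrS − E[Tr]`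
    ∀ x : Fin n → 𝒳,
      ((∫ ω, avgLoss W x (fun i => (Csqrt (x i)).mulVec (ε (Sum.inr i) ω))
            (Chat x (fun j => (Csqrt (x j)).mulVec (ε (Sum.inl j) ω))) ∂μ)
        - (∫ ω, avgLoss W x (fun i => (Csqrt (x i)).mulVec (ε (Sum.inl i) ω))
            (Chat x (fun j => (Csqrt (x j)).mulVec (ε (Sum.inl j) ω))) ∂μ))
        =
      ((∫ ω, avgLoss W (fun i => X i ω) (fun i => (Csqrt (X i ω)).mulVec (ε (Sum.inr i) ω))
            (Chat (fun j => X j ω) (fun j => (Csqrt (X j ω)).mulVec (ε (Sum.inl j) ω))) ∂μ)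
        - (∫ ω, avgLoss W (fun i => X i ω) (fun i => (Csqrt (X i ω)).mulVec (ε (Sum.inl i) ω))
            (Chat (fun j => X j ω) (fun j => (Csqrt (X j ω)).mulVec (ε (Sum.inl j) ω))) ∂μ)) :=
  design_independent_fixedX_optimism_eq_sameX_optimism_general μ n p Csqrt hCmeas W hWmeas ε hεmeas
    X hXmeas hεXindep Chat hChatMeas hIntS hconst
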